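/- arXiv:1311.5217 — 6 statements merged into one kernel-verified Lean document; each statement's English description precedes it below -/
import Mathlib

section
/- Let gl^M denote the Lie algebra of ℤ≥1 × ℤ≥1 matrices over ℂ with finite rows and columns, and let I ⊆ gl^M be a Lie ideal containing a diagonal matrix D = Σ d_i E_{ii} with all d_i pairwise distinct. Then I contains every matrix in gl^M with zeros on the diagonal, and moreover I = gl^M. -/
open scoped BigOperators

/-!
A commutator with the diagonal matrix `D = diag d` scales the entry `(i, j)` by `d j - d i`,
so when the `d i` are distinct every zero-diagonal matrix `X` is `[Y, D]` with
`Y i j = X i j / (d j - d i)`, and lies in the ideal.  A diagonal matrix `diag s` is the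
commutator of the upper shift `Σ E_{i,i+1}` with the zero-diagonal lower shift
`Σ t_j E_{j+1,j}`, where `t` are the partial sums of `s`; adding the two parts gives all of
`gl^M`.
-/

/-- Matrices indexed by positive integers with finitely many nonzero entries in every
row and every column. -/
def RCFinite (X : ℕ+ → ℕ+ → ℂ) : Prop :=
  (∀ i, {j | X i j ≠ 0}.Finite) ∧ (∀ j, {i | X i j ≠ 0}.Finite)

/-- The commutator bracket `[X,Y] = XY - YX` of two such matrices (the sums involved are
finite when `X` and `Y` are row- and column-finite). -/
noncomputable def mBracket (X Y : ℕ+ → ℕ+ → ℂ) : ℕ+ → ℕ+ → ℂ :=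
  fun i j => (∑ᶠ k, X i k * Y k j) - (∑ᶠ k, Y i k * X k j)

def diag (s : ℕ+ → ℂ) : ℕ+ → ℕ+ → ℂ := fun i j => if i = j then s i else 0

def offDiag (X : ℕ+ → ℕ+ → ℂ) : ℕ+ → ℕ+ → ℂ := fun i j => if i = j then 0 else X i j

def shiftUp : ℕ+ → ℕ+ → ℂ := fun i j => if j = i + 1 then 1 else 0

def shiftDown (t : ℕ → ℂ) : ℕ+ → ℕ+ → ℂ := fun i j => if i = j + 1 then t j else 0

theorem offDiag_add_diag (X : ℕ+ → ℕ+ → ℂ) : offDiag X + diag (fun i => X i i) = X := by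
  funext i j
  by_cases h : i = j <;> simp [offDiag, diag, h]

namespace RCFinite

theorem mono {X Y : ℕ+ → ℕ+ → ℂ} (hX : RCFinite X)
    (h : ∀ i j, Y i j ≠ 0 → X i j ≠ 0) : RCFinite Y :=
  ⟨fun i => (hX.1 i).subset fun j => h i j, fun j => (hX.2 j).subset fun i => h i j⟩

theorem transpose {X : ℕ+ → ℕ+ → ℂ} (hX : RCFinite X) : RCFinite fun i j => X j i :=
  ⟨hX.2, hX.1⟩

theorem of_support_subset_graph {X : ℕ+ → ℕ+ → ℂ} {f : ℕ+ → ℕ+} (hf : f.Injective)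
    (h : ∀ i j, X i j ≠ 0 → j = f i) : RCFinite X :=
  ⟨fun i => (Set.finite_singleton (f i)).subset fun j hj => h i j hj,
   fun _ => Set.Subsingleton.finite fun _ hi _ hi' => hf ((h _ _ hi).symm.trans (h _ _ hi'))⟩

theorem offDiag {X : ℕ+ → ℕ+ → ℂ} (hX : RCFinite X) : RCFinite (offDiag X) :=
  hX.mono fun i j h => by
    by_cases hij : i = j <;> simp_all [_root_.offDiag]

theorem shiftUp : RCFinite shiftUp :=
  of_support_subset_graph (f := (· + 1)) (add_left_injective 1) fun i j h => by
    by_contra hj; simp [_root_.shiftUp, hj] at h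

theorem shiftDown (t : ℕ → ℂ) : RCFinite (shiftDown t) :=
  RCFinite.transpose (X := fun i j => if j = i + 1 then t i else 0) <|
    of_support_subset_graph (f := (· + 1)) (add_left_injective 1) fun i j h => by
      by_contra hj; simp [hj] at h

end RCFinite

theorem mBracket_diag_right (X : ℕ+ → ℕ+ → ℂ) (d : ℕ+ → ℂ) (i j : ℕ+) :
    mBracket X (diag d) i j = X i j * (d j - d i) := by
  have hXD : ∑ᶠ k, X i k * diag d k j = X i j * d j := by
    rw [finsum_eq_single _ j fun k hk => by simp [diag, hk]]
    simp [diag]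
  have hDX : ∑ᶠ k, diag d i k * X k j = d i * X i j := by
    rw [finsum_eq_single _ i fun k hk => by simp [diag, Ne.symm hk]]
    simp [diag]
  rw [mBracket, hXD, hDX]
  ring

theorem finsum_ite_eq_add_one (f : ℕ → ℂ) (hf : f 0 = 0) (i : ℕ+) :
    ∑ᶠ k : ℕ+, (if i = k + 1 then f k else 0) = f (i - 1) := by
  by_cases hi : i = 1
  · subst hi
    simp [hf, fun k : ℕ+ => (PNat.lt_add_left 1 k).ne]
  · obtain ⟨m, rfl⟩ := PNat.exists_eq_succ_of_ne_one hi
    rw [finsum_eq_single _ m fun k hk => by simp [Ne.symm hk]]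
    simp

theorem mBracket_shiftUp_shiftDown (t : ℕ → ℂ) (ht : t 0 = 0) (i j : ℕ+) :
    mBracket shiftUp (shiftDown t) i j = if i = j then t i - t (i - 1) else 0 := by
  have hUD : ∑ᶠ k, shiftUp i k * shiftDown t k j = if i = j then t j else 0 := by
    rw [finsum_eq_single _ (i + 1) fun k hk => by simp [shiftUp, hk]]
    simp [shiftUp, shiftDown]
  have hDU : ∑ᶠ k, shiftDown t i k * shiftUp k j = if i = j then t (i - 1) else 0 := by
    have hterm : ∀ k, shiftDown t i k * shiftUp k j =
        if i = k + 1 then (if i = j then t k else 0) else 0 := fun k => by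
      by_cases hik : i = k + 1
      · simp [shiftDown, shiftUp, hik, eq_comm]
      · simp [shiftDown, hik]
    simp_rw [hterm]
    exact finsum_ite_eq_add_one (fun k => if i = j then t k else 0) (by simp [ht]) i
  rw [mBracket, hUD, hDU]
  split_ifs with hij
  · rw [hij]
  · ring

theorem diag_eq_mBracket_shiftUp_shiftDown (s : ℕ+ → ℂ) :
    diag s = mBracket shiftUp (shiftDown fun n => ∑ k ∈ Finset.range n, s k.succPNat) := by
  funext i j
  rw [mBracket_shiftUp_shiftDown _ (Finset.sum_range_zero _)]
  split_ifs with hij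
  · subst hij
    have hi : (i : ℕ) = i.natPred + 1 := (PNat.natPred_add_one i).symm
    rw [hi, Nat.add_sub_cancel, Finset.sum_range_succ, add_sub_cancel_left,
      PNat.succPNat_natPred]
    simp [diag]
  · simp [diag, hij]

theorem mem_of_diag_eq_zero {I : Set (ℕ+ → ℕ+ → ℂ)}
    (hideal : ∀ X, RCFinite X → ∀ Y ∈ I, mBracket X Y ∈ I) {d : ℕ+ → ℂ}
    (hd : d.Injective) (hD : diag d ∈ I) {X : ℕ+ → ℕ+ → ℂ} (hX : RCFinite X)
    (hX0 : ∀ i, X i i = 0) : X ∈ I := by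
  have hY : RCFinite fun i j => X i j / (d j - d i) :=
    hX.mono fun i j h => (div_ne_zero_iff.mp h).1
  convert hideal _ hY _ hD using 1
  funext i j
  rw [mBracket_diag_right]
  by_cases hij : i = j
  · subst hij; simp [hX0]
  · rw [div_mul_cancel₀ _ (sub_ne_zero.mpr fun h => hij (hd h).symm)]

theorem diag_mem {I : Set (ℕ+ → ℕ+ → ℂ)}
    (hideal : ∀ X, RCFinite X → ∀ Y ∈ I, mBracket X Y ∈ I)
    (hoff : ∀ X, RCFinite X → (∀ i, X i i = 0) → X ∈ I) (s : ℕ+ → ℂ) : diag s ∈ I := by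
  rw [diag_eq_mBracket_shiftUp_shiftDown]
  refine hideal _ RCFinite.shiftUp _ (hoff _ (RCFinite.shiftDown _) fun i => ?_)
  simp [shiftDown, (PNat.lt_add_right i 1).ne]

theorem stmt_4_general (I : Set (ℕ+ → ℕ+ → ℂ))
    (hadd : ∀ X ∈ I, ∀ Y ∈ I, X + Y ∈ I)
    (hideal : ∀ X, RCFinite X → ∀ Y ∈ I, mBracket X Y ∈ I)
    (d : ℕ+ → ℂ) (hd : Function.Injective d)
    (hD : (fun i j => if i = j then d i else 0) ∈ I) :
    (∀ X, RCFinite X → (∀ i, X i i = 0) → X ∈ I) ∧ (∀ X, RCFinite X → X ∈ I) := by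
  have hoff : ∀ X, RCFinite X → (∀ i, X i i = 0) → X ∈ I :=
    fun X hX hX0 => mem_of_diag_eq_zero hideal hd hD hX hX0
  refine ⟨hoff, fun X hX => ?_⟩
  rw [← offDiag_add_diag X]
  exact hadd _ (hoff _ hX.offDiag fun i => by simp [offDiag]) _ (diag_mem hideal hoff _)

/-- Let `gl^M` be the Lie algebra of `ℤ≥1 × ℤ≥1` matrices with finite rows
and columns, and `I ⊆ gl^M` a Lie ideal containing a diagonal matrix `D = Σ dᵢ Eᵢᵢ` with
pairwise distinct entries.  Then `I` contains every matrix of `gl^M` with zero diagonal,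
and `I = gl^M`. -/
theorem stmt_4 (I : Set (ℕ+ → ℕ+ → ℂ))
    (hIsub : ∀ X ∈ I, RCFinite X)
    (hadd : ∀ X ∈ I, ∀ Y ∈ I, X + Y ∈ I)
    (hsmul : ∀ (c : ℂ), ∀ X ∈ I, c • X ∈ I)
    (hideal : ∀ X, RCFinite X → ∀ Y ∈ I, mBracket X Y ∈ I)
    (d : ℕ+ → ℂ) (hd : Function.Injective d)
    (hD : (fun i j => if i = j then d i else 0) ∈ I) :
    (∀ X, RCFinite X → (∀ i, X i i = 0) → X ∈ I) ∧ (∀ X, RCFinite X → X ∈ I) :=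
  stmt_4_general I hadd hideal d hd hD
end

section
/- For any matrix X = (x_{ij})_{i,j≥1} with finite rows and finite columns, there exists a strictly increasing sequence i_1 = 1 < i_2 < i_3 < ... of positive integers such that x_{ij} = 0 unless both i and j lie in the interval [i_k, i_{k+2} - 1] for some k ≥ 1. -/
/-!
Choose `s (k + 1)` so large that every entry in a row or column with index below `s k` lies in a
row and a column below `s (k + 1)`; this is possible because only finitely many rows and columns
are involved, each with finitely many nonzero entries. For a nonzero entry at `(a, b)`, take `k`
with `s k ≤ min a b < s (k + 1)`: then `max a b < s (k + 2)` by the choice of `s (k + 2)`.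
-/

section BandSequence

variable {α : Type*} [LinearOrder α]

lemma exists_le_and_lt_succ {s : ℕ → α} {c : α} (h0 : s 0 ≤ c) (hc : ∃ k, c < s k) :
    ∃ k, s k ≤ c ∧ c < s (k + 1) := by
  classical
  obtain ⟨k, hk⟩ : ∃ k, Nat.find hc = k + 1 :=
    Nat.exists_eq_succ_of_ne_zero fun h ↦ (h ▸ Nat.find_spec hc).not_ge h0
  exact ⟨k, not_lt.mp (Nat.find_min hc (by omega)), hk ▸ Nat.find_spec hc⟩

variable [LocallyFiniteOrderBot α]

lemma StrictMono.exists_gt {s : ℕ → α} (hs : StrictMono s) (c : α) : ∃ k, c < s k := by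
  obtain ⟨_, ⟨k, rfl⟩, hk⟩ := (Set.infinite_range_of_injective hs.injective).exists_gt c
  exact ⟨k, hk⟩

variable [NoMaxOrder α]

lemma exists_gt_forall_rel_lt (r : α → α → Prop) (hr : ∀ a, {b | r a b}.Finite) (n : α) :
    ∃ m, n < m ∧ ∀ a b, r a b → a < n → b < m := by
  have : Nonempty α := ⟨n⟩
  have hfin : (insert n (⋃ a ∈ Set.Iio n, {b | r a b})).Finite :=
    ((Set.finite_Iio n).biUnion fun a _ ↦ hr a).insert n
  obtain ⟨M, hM⟩ := hfin.exists_le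
  obtain ⟨m, hm⟩ := exists_gt M
  refine ⟨m, (hM n (Set.mem_insert n _)).trans_lt hm, fun a b hab ha ↦ ?_⟩
  exact (hM b (Set.mem_insert_of_mem n (Set.mem_biUnion ha hab))).trans_lt hm

variable [OrderBot α]

theorem exists_strictMono_band (r : α → α → Prop) (hrow : ∀ a, {b | r a b}.Finite)
    (hcol : ∀ b, {a | r a b}.Finite) :
    ∃ s : ℕ → α, s 0 = ⊥ ∧ StrictMono s ∧
      ∀ a b, r a b → ∃ k, s k ≤ a ∧ a < s (k + 2) ∧ s k ≤ b ∧ b < s (k + 2) := by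
  set r' : α → α → Prop := fun a b ↦ r a b ∨ r b a
  choose g hg_gt hg using exists_gt_forall_rel_lt r' fun a ↦ (hrow a).union (hcol a)
  set s : ℕ → α := fun k ↦ g^[k] ⊥
  have hsucc (k : ℕ) : s (k + 1) = g (s k) := Function.iterate_succ_apply' g k ⊥
  have hs : StrictMono s := strictMono_nat_of_lt_succ fun k ↦ hsucc k ▸ hg_gt (s k)
  have band (a b : α) (hab : r' a b) (hle : a ≤ b) :
      ∃ k, s k ≤ a ∧ a < s (k + 2) ∧ s k ≤ b ∧ b < s (k + 2) := by
    obtain ⟨k, hka, hak⟩ := exists_le_and_lt_succ bot_le (hs.exists_gt a)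
    exact ⟨k, hka, hak.trans (hs (Nat.lt_succ_self _)), hka.trans hle,
      hsucc (k + 1) ▸ hg _ a b hab hak⟩
  refine ⟨s, rfl, hs, fun a b hab ↦ ?_⟩
  rcases le_total a b with hle | hle
  · exact band a b (Or.inl hab) hle
  · obtain ⟨k, hkb, hbk, hka, hak⟩ := band b a (Or.inr hab) hle
    exact ⟨k, hka, hak, hkb, hbk⟩

end BandSequence

/-- For any matrix `X = (x_{ij})_{i,j ≥ 1}` (indexed by positive integers)
with finite rows and finite columns, there is a strictly increasing sequence
`i_1 = 1 < i_2 < …` such that `x_{ab} = 0` unless both `a` and `b` lie in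
`[i_k, i_{k+2} - 1]` (equivalently `i_k ≤ a, b < i_{k+2}`) for some `k`. -/
theorem stmt_6 (X : ℕ+ → ℕ+ → ℂ)
    (hrow : ∀ i, {j | X i j ≠ 0}.Finite)
    (hcol : ∀ j, {i | X i j ≠ 0}.Finite) :
    ∃ s : ℕ → ℕ+, s 0 = 1 ∧ StrictMono s ∧
      ∀ a b : ℕ+, X a b ≠ 0 →
        ∃ k : ℕ, s k ≤ a ∧ a < s (k + 2) ∧ s k ≤ b ∧ b < s (k + 2) :=
  PNat.bot_eq_one ▸ exists_strictMono_band (fun a b ↦ X a b ≠ 0) hrow hcol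
end

section
/- Let k ⊆ l be Lie algebras and R an l-module on which k acts densely. Then: (a) k acts densely on any l-submodule N of R and on the quotient R/N; (b) k acts densely on the tensor power R^{⊗n} for every n ≥ 1; (c) k acts densely on the direct sum R^{⊕n} for every n ≥ 1. -/
/-!
Density is inherited along surjective Lie module maps (lift the finitely many vectors) and
injective ones (compare the brackets after applying the map), which gives submodules and
quotients; for direct sums one matches all components of all vectors at once. Finitely many
tensors lie in the span of pure tensors whose factors come from one finite set `T ⊆ R`, and by
the Leibniz rule an element of `K` matching `x` on `T` matches it on that whole span.
-/

open scoped TensorProduct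

/-- `K ⊆ L` acts densely on an `L`-module `M`: any finite family of vectors can be
matched. -/
def ActsDensely (L : Type*) [LieRing L] [LieAlgebra ℂ L] (K : LieSubalgebra ℂ L)
    (M : Type*) [AddCommGroup M] [Module ℂ M] [LieRingModule L M] : Prop :=
  ∀ (q : ℕ) (v : Fin q → M) (x : L), ∃ y ∈ K, ∀ i, ⁅y, v i⁆ = ⁅x, v i⁆

namespace PiTensorProduct

variable {R : Type*} [CommSemiring R] {ι : Type*} [Fintype ι] {M : Type*} [AddCommMonoid M]
  [Module R M]

theorem exists_finset_mem_span_tprod (z : ⨂[R] _ : ι, M) :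
    ∃ T : Finset M, z ∈ Submodule.span R (tprod R '' Set.univ.pi fun _ => (T : Set M)) := by
  classical
  have span_mono {T T' : Finset M} (h : T ⊆ T') :
      Submodule.span R (tprod R '' Set.univ.pi fun _ : ι => (T : Set M)) ≤
        Submodule.span R (tprod R '' Set.univ.pi fun _ : ι => (T' : Set M)) :=
    Submodule.span_mono <| Set.image_mono <| Set.pi_mono fun _ _ => Finset.coe_subset.2 h
  induction z using PiTensorProduct.induction_on with
  | smul_tprod r f =>
    refine ⟨Finset.univ.image f, Submodule.smul_mem _ _ (Submodule.subset_span ?_)⟩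
    exact ⟨f, fun i _ => Finset.mem_coe.2 (Finset.mem_image_of_mem f (Finset.mem_univ i)), rfl⟩
  | add a b ha hb =>
    obtain ⟨Ta, ha⟩ := ha
    obtain ⟨Tb, hb⟩ := hb
    exact ⟨Ta ∪ Tb, Submodule.add_mem _ (span_mono Finset.subset_union_left ha)
      (span_mono Finset.subset_union_right hb)⟩

end PiTensorProduct

theorem span_tprod_le_eqLocus_of_leibniz {R : Type*} [CommSemiring R] {L : Type*} [LieRing L]
    {M : Type*} [AddCommGroup M] [Module R M] [LieRingModule L M] {ι : Type*} [Fintype ι]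
    [DecidableEq ι] (act : L → Module.End R (⨂[R] _ : ι, M))
    (hact : ∀ (x : L) (v : ι → M), act x (PiTensorProduct.tprod R v)
      = ∑ i, PiTensorProduct.tprod R (Function.update v i ⁅x, v i⁆))
    {S : Set M} {x y : L} (hxy : ∀ m ∈ S, ⁅y, m⁆ = ⁅x, m⁆) :
    Submodule.span R (PiTensorProduct.tprod R '' Set.univ.pi fun _ => S) ≤
      LinearMap.eqLocus (act y) (act x) := by
  rw [Submodule.span_le]
  rintro _ ⟨v, hv, rfl⟩
  change act y _ = act x _
  rw [hact y v, hact x v]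
  exact Finset.sum_congr rfl fun i _ => by rw [hxy (v i) (hv i (Set.mem_univ i))]

namespace ActsDensely

variable {L : Type*} [LieRing L] [LieAlgebra ℂ L] {K : LieSubalgebra ℂ L}
  {M : Type*} [AddCommGroup M] [Module ℂ M] [LieRingModule L M]
  {M' : Type*} [AddCommGroup M'] [Module ℂ M'] [LieRingModule L M']

theorem exists_forall_of_finite (h : ActsDensely L K M) {ι : Type*} [Finite ι] (v : ι → M)
    (x : L) : ∃ y ∈ K, ∀ i, ⁅y, v i⁆ = ⁅x, v i⁆ := by
  obtain ⟨q, ⟨e⟩⟩ := Finite.exists_equiv_fin ι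
  obtain ⟨y, hyK, hy⟩ := h q (v ∘ e.symm) x
  exact ⟨y, hyK, fun i => by simpa using hy (e i)⟩

theorem exists_forall_mem_finset (h : ActsDensely L K M) (S : Finset M) (x : L) :
    ∃ y ∈ K, ∀ m ∈ S, ⁅y, m⁆ = ⁅x, m⁆ := by
  obtain ⟨y, hyK, hy⟩ := h.exists_forall_of_finite (fun m : S => (m : M)) x
  exact ⟨y, hyK, fun m hm => hy ⟨m, hm⟩⟩

theorem exists_forall_forall_of_finite (h : ActsDensely L K M) {ι κ : Type*} [Finite ι]
    [Finite κ] (v : ι → κ → M) (x : L) : ∃ y ∈ K, ∀ i j, ⁅y, v i j⁆ = ⁅x, v i j⁆ := by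
  obtain ⟨y, hyK, hy⟩ := h.exists_forall_of_finite (Function.uncurry v) x
  exact ⟨y, hyK, fun i j => hy (i, j)⟩

theorem of_injective (f : M →ₗ⁅ℂ,L⁆ M') (hf : Function.Injective f)
    (h : ActsDensely L K M') : ActsDensely L K M := by
  intro q v x
  obtain ⟨y, hyK, hy⟩ := h q (f ∘ v) x
  exact ⟨y, hyK, fun i => hf <| by simpa using hy i⟩

theorem of_surjective (f : M →ₗ⁅ℂ,L⁆ M') (hf : Function.Surjective f)
    (h : ActsDensely L K M) : ActsDensely L K M' := by
  intro q v x
  choose w hw using fun i => hf (v i)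
  obtain ⟨y, hyK, hy⟩ := h q w x
  exact ⟨y, hyK, fun i => by rw [← hw i, ← LieModuleHom.map_lie, hy i, LieModuleHom.map_lie]⟩

theorem lieSubmodule [LieModule ℂ L M] (h : ActsDensely L K M) (N : LieSubmodule ℂ L M) :
    ActsDensely L K N :=
  h.of_injective N.incl N.injective_incl

theorem quotient [LieModule ℂ L M] (h : ActsDensely L K M) (N : LieSubmodule ℂ L M) :
    ActsDensely L K (M ⧸ N) :=
  h.of_surjective (LieSubmodule.Quotient.mk' N) (LieSubmodule.Quotient.surjective_mk' N)

theorem exists_forall_act_eq {ι : Type*} [Fintype ι] [DecidableEq ι] (h : ActsDensely L K M)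
    (act : L → Module.End ℂ (⨂[ℂ] _ : ι, M))
    (hact : ∀ (x : L) (v : ι → M), act x (PiTensorProduct.tprod ℂ v)
      = ∑ i, PiTensorProduct.tprod ℂ (Function.update v i ⁅x, v i⁆))
    {κ : Type*} [Fintype κ] (u : κ → ⨂[ℂ] _ : ι, M) (x : L) :
    ∃ y ∈ K, ∀ i, act y (u i) = act x (u i) := by
  classical
  choose T hT using fun i => PiTensorProduct.exists_finset_mem_span_tprod (u i)
  obtain ⟨y, hyK, hy⟩ := h.exists_forall_mem_finset (Finset.univ.biUnion T) x
  refine ⟨y, hyK, fun i => span_tprod_le_eqLocus_of_leibniz act hact hy ?_⟩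
  refine Submodule.span_mono (Set.image_mono <| Set.pi_mono fun _ _ => ?_) (hT i)
  exact Finset.coe_subset.2 <| Finset.subset_biUnion_of_mem T (Finset.mem_univ i)

end ActsDensely

/-- if `K ⊆ L` acts densely on an `L`-module `R`, then (a) `K` acts
densely on every `L`-submodule `N` of `R` and on the quotient `R/N`; (b) `K` acts
densely on the tensor power `R^{⊗n}` for every `n ≥ 1` (the action on `R^{⊗n}` being
the one given by the Leibniz rule, characterised on pure tensors); (c) `K` acts densely
on the direct sum `R^{⊕n}` (componentwise action) for every `n ≥ 1`. -/
theorem stmt_11 (L : Type*) [LieRing L] [LieAlgebra ℂ L] (K : LieSubalgebra ℂ L)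
    (R : Type*) [AddCommGroup R] [Module ℂ R] [LieRingModule L R] [LieModule ℂ L R]
    (hdense : ActsDensely L K R) :
    -- (a) submodules and quotients:
    (∀ N : LieSubmodule ℂ L R, ActsDensely L K N ∧ ActsDensely L K (R ⧸ N)) ∧
    -- (b) tensor powers:
    (∀ n : ℕ, 1 ≤ n → ∀ act : L → Module.End ℂ (⨂[ℂ]^n R),
      (∀ (x : L) (v : Fin n → R),
        act x (PiTensorProduct.tprod ℂ v)
          = ∑ i : Fin n, PiTensorProduct.tprod ℂ (Function.update v i ⁅x, v i⁆)) →
      ∀ (q : ℕ) (u : Fin q → ⨂[ℂ]^n R) (x : L),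
        ∃ y ∈ K, ∀ i, act y (u i) = act x (u i)) ∧
    -- (c) direct sums:
    (∀ n : ℕ, 1 ≤ n → ∀ (q : ℕ) (v : Fin q → (Fin n → R)) (x : L),
      ∃ y ∈ K, ∀ i j, ⁅(y : L), v i j⁆ = ⁅x, v i j⁆) :=
  ⟨fun N => ⟨hdense.lieSubmodule N, hdense.quotient N⟩,
    fun _ _ act hact _ u x => hdense.exists_forall_act_eq act hact u x,
    fun _ _ _ v x => hdense.exists_forall_forall_of_finite v x⟩
end

section
/- Let V be a countable-dimensional vector space with basis {v_i}_{i≥1} and V_* = span{v_i*}. The Lie algebra j(V,V_*) of generalized Jacobi matrices — matrices J = (x_{ij})_{i,j≥1} such that x_{ij} = 0 whenever |i - j| > m_J for some bound m_J depending on J — acts densely on V ⊕ V_* as a subalgebra of gl^M(V,V_*) (the Lie algebra of matrices with finite rows and columns). That is, for any finitely many vectors u_1,...,u_n ∈ V ⊕ V_* and any X ∈ gl^M(V,V_*), there exists J ∈ j(V,V_*) with J·u_k = X·u_k for all k. -/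
/-!
All the vectors `u_k` live in the span of the first `N` basis vectors (resp. dual basis
vectors), so `X` only needs to be matched on the first `N` columns (for the action on `V`)
and the first `N` rows (for the action on `V_*`).  Keeping exactly those rows and columns of
`X` gives a matrix with finitely many nonzero entries, since rows and columns of `X` are
finite, and any such matrix is banded.
-/

variable {R : Type*}

def IsBanded [Zero R] (J : ℕ → ℕ → R) : Prop :=
  ∃ m : ℕ, ∀ i j : ℕ, |(i : ℤ) - (j : ℤ)| > (m : ℤ) → J i j = 0

theorem isBanded_of_finite_support [Zero R] {J : ℕ → ℕ → R}
    (hJ : {p : ℕ × ℕ | J p.1 p.2 ≠ 0}.Finite) : IsBanded J := by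
  obtain ⟨⟨a, b⟩, hab⟩ := hJ.bddAbove
  refine ⟨max a b, fun i j hij => by_contra fun hne => ?_⟩
  obtain ⟨hi, hj⟩ : i ≤ a ∧ j ≤ b := Prod.mk_le_mk.mp (hab hne)
  rw [gt_iff_lt, lt_abs] at hij
  omega

def hookRestrict [Zero R] (X : ℕ → ℕ → R) (N : ℕ) : ℕ → ℕ → R :=
  fun i j => if i < N ∨ j < N then X i j else 0

section hookRestrict

variable [Zero R] {X : ℕ → ℕ → R} {N i j : ℕ}

theorem hookRestrict_of_lt_left (hi : i < N) : hookRestrict X N i j = X i j :=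
  if_pos (Or.inl hi)

theorem hookRestrict_of_lt_right (hj : j < N) : hookRestrict X N i j = X i j :=
  if_pos (Or.inr hj)

theorem finite_support_hookRestrict (hrow : ∀ i, {j | X i j ≠ 0}.Finite)
    (hcol : ∀ j, {i | X i j ≠ 0}.Finite) (N : ℕ) :
    {p : ℕ × ℕ | hookRestrict X N p.1 p.2 ≠ 0}.Finite := by
  refine (((Set.finite_lt_nat N).biUnion fun i _ => (Set.finite_singleton i).prod (hrow i)).union
    ((Set.finite_lt_nat N).biUnion fun j _ => (hcol j).prod (Set.finite_singleton j))).subset ?_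
  rintro ⟨i, j⟩ h
  simp only [hookRestrict, Set.mem_ofPred_eq, ne_eq, ite_eq_right_iff, Classical.not_imp] at h
  obtain ⟨hi | hj, hX⟩ := h
  · exact Or.inl (Set.mem_biUnion hi ⟨rfl, hX⟩)
  · exact Or.inr (Set.mem_biUnion hj ⟨hX, rfl⟩)

end hookRestrict

theorem finsum_mul_congr_of_ne_zero {α : Type*} [NonUnitalNonAssocSemiring R] {f g v : α → R}
    (h : ∀ j, v j ≠ 0 → f j = g j) : ∑ᶠ j, f j * v j = ∑ᶠ j, g j * v j :=
  finsum_congr fun j => by by_cases hv : v j = 0 <;> simp [hv, h]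

theorem Finsupp.exists_lt_of_ne_zero_of_finite {ι : Type*} [Finite ι] [Zero R]
    (v : ι → ℕ →₀ R) : ∃ N, ∀ k j, v k j ≠ 0 → j < N := by
  obtain ⟨N, hN⟩ := Set.finite_iUnion (fun k => (v k).support.finite_toSet) |>.bddAbove
  exact ⟨N + 1, fun k j hj => Nat.lt_succ_of_le <|
    hN (Set.mem_iUnion.mpr ⟨k, Finsupp.mem_support_iff.mpr hj⟩)⟩

/-- density of the Lie algebra `j(V,V_*)` of generalized Jacobi matrices
in `gl^M(V,V_*)` for countable-dimensional `V` (modelled as `ℕ →₀ ℂ`, with `V_*` the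
span of the dual basis, also modelled as `ℕ →₀ ℂ`).  `gl^M(V,V_*)` consists of matrices
with finite rows and columns, acting on `V` by matrix-column multiplication
`(X·v) i = Σ_j X i j * v j` and on `V_*` by (minus) the transpose action.  For any
finitely many vectors `u_1,…,u_n ∈ V ⊕ V_*` and any `X ∈ gl^M(V,V_*)` there is a banded
matrix `J` (with `J i j = 0` whenever `|i - j| > m` for some bound `m`) acting on all
the `u_k` exactly as `X` does. -/
theorem stmt_13 (X : ℕ → ℕ → ℂ)
    (hrow : ∀ i, {j | X i j ≠ 0}.Finite)
    (hcol : ∀ j, {i | X i j ≠ 0}.Finite)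
    (n : ℕ) (u : Fin n → (ℕ →₀ ℂ) × (ℕ →₀ ℂ)) :
    ∃ J : ℕ → ℕ → ℂ,
      (∃ m : ℕ, ∀ i j : ℕ, |(i : ℤ) - (j : ℤ)| > (m : ℤ) → J i j = 0) ∧
      ∀ k : Fin n,
        (∀ i : ℕ, ∑ᶠ j, J i j * (u k).1 j = ∑ᶠ j, X i j * (u k).1 j) ∧
        (∀ i : ℕ, ∑ᶠ j, J j i * (u k).2 j = ∑ᶠ j, X j i * (u k).2 j) := by
  obtain ⟨N₁, hN₁⟩ := Finsupp.exists_lt_of_ne_zero_of_finite fun k => (u k).1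
  obtain ⟨N₂, hN₂⟩ := Finsupp.exists_lt_of_ne_zero_of_finite fun k => (u k).2
  refine ⟨hookRestrict X (max N₁ N₂),
    isBanded_of_finite_support (finite_support_hookRestrict hrow hcol _),
    fun k => ⟨fun i => ?_, fun i => ?_⟩⟩
  · exact finsum_mul_congr_of_ne_zero fun j hj =>
      hookRestrict_of_lt_right (lt_max_of_lt_left (hN₁ k j hj))
  · exact finsum_mul_congr_of_ne_zero fun j hj =>
      hookRestrict_of_lt_left (lt_max_of_lt_right (hN₂ k j hj))
end

section
/- Let V be a vector space with a non-degenerate symmetric bilinear form, and suppose V = U ⊕ U* where U is countable-dimensional, both U and U* isotropic, and the form restricts to the canonical pairing between U and U*. Suppose V also carries a second symmetric bilinear form for which some basis of V is orthonormal. Then the two forms are not equivalent: there is no linear automorphism of V carrying one form to the other. (Equivalently: V has a maximal isotropic subspace of countable dimension for the first form, but every maximal isotropic subspace for an orthonormal-basis form on a space of uncountable dimension is not of countable dimension.) -/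
/-!
Suppose `g` carried `B'` to `B16`. Then `W = g⁻¹(U × 0)` is the image of a countable-dimensional
space, so the vectors of `W` have their `b`-coordinates in a fixed countable set `T` of indices,
while `V` has uncountable dimension (`U*` already does), so some index `i` lies outside `T`.
Since `b` is `B'`-orthonormal, `B' (b i) w` is the `i`-th coordinate of `w`, which vanishes on
`W`. But `U × 0` is its own orthogonal for `B16`, so `b i ∈ W`, whose `i`-th coordinate is `1`.
-/

/-- The vector space `V = U ⊕ U*` for the countable-dimensional space `U = ℕ →₀ ℂ`. -/
abbrev V16 : Type := (ℕ →₀ ℂ) × Module.Dual ℂ (ℕ →₀ ℂ)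

/-- The canonical non-degenerate symmetric bilinear form on `V = U ⊕ U*` extending the
pairing between `U` and `U*`, for which `U` and `U*` are isotropic. -/
noncomputable def B16 : V16 → V16 → ℂ := fun p q => p.2 q.1 + q.2 p.1

open Cardinal

universe u v

theorem Module.Basis.apply_eq_repr_of_orthonormal {ι R M : Type*} [DecidableEq ι]
    [CommSemiring R] [AddCommMonoid M] [Module R M] (b : Module.Basis ι R M)
    (B : M →ₗ[R] M →ₗ[R] R) (hB : ∀ i j, B (b i) (b j) = if i = j then 1 else 0)
    (i : ι) (x : M) : B (b i) x = b.repr x i :=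
  LinearMap.congr_fun (b.ext (f₂ := Finsupp.lapply i ∘ₗ b.repr.toLinearMap) fun j => by
    simp [hB, Finsupp.single_apply, eq_comm]) x

theorem Module.Basis.exists_countable_support_range {ι κ R M N : Type*} [Semiring R]
    [AddCommMonoid M] [Module R M] [AddCommMonoid N] [Module R N] [Countable κ]
    (b : Module.Basis ι R M) (c : Module.Basis κ R N) (f : N →ₗ[R] M) :
    ∃ T : Set ι, T.Countable ∧ ∀ u, ∀ i ∉ T, b.repr (f u) i = 0 := by
  refine ⟨⋃ k, (b.repr (f (c k))).support,
    Set.countable_iUnion fun _ => Finset.countable_toSet _, fun u i hi => ?_⟩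
  suffices h : Finsupp.lapply i ∘ₗ b.repr.toLinearMap ∘ₗ f = 0 from LinearMap.congr_fun h u
  refine c.ext fun k => ?_
  have hk : i ∉ (b.repr (f (c k))).support := fun h => hi (Set.mem_iUnion.mpr ⟨k, h⟩)
  simpa using hk

theorem Module.Basis.exists_notMem_of_countable {ι K : Type*} {V : Type v} [Field K]
    [AddCommGroup V] [Module K V] (b : Module.Basis ι K V) (hV : ℵ₀ < Module.rank K V)
    {T : Set ι} (hT : T.Countable) : ∃ i, i ∉ T := by
  by_contra! h
  have : Countable ι := Set.countable_univ_iff.mp (hT.mono fun i _ => h i)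
  have hι : lift.{v} #ι ≤ ℵ₀ := lift_le_aleph0.mpr mk_le_aleph0
  rw [b.mk_eq_rank, lift_le_aleph0] at hι
  exact hι.not_gt hV

theorem aleph0_lt_rank_dual {K V : Type u} [Field K] [AddCommGroup V] [Module K V]
    (h : ℵ₀ ≤ Module.rank K V) : ℵ₀ < Module.rank K (Module.Dual K V) :=
  h.trans_lt (rank_lt_rank_dual h)

theorem aleph0_lt_rank_V16 : ℵ₀ < Module.rank ℂ V16 := by
  rw [rank_prod']
  exact (aleph0_lt_rank_dual (by simp)).trans_le le_add_self

theorem B16_apply_inl (p : V16) (u : ℕ →₀ ℂ) : B16 p (u, 0) = p.2 u := by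
  simp [B16]

theorem stmt_16_general (ι : Type*) [DecidableEq ι] (b : Module.Basis ι ℂ V16)
    (B' : V16 →ₗ[ℂ] V16 →ₗ[ℂ] ℂ)
    (hB'ortho : ∀ i j, B' (b i) (b j) = if i = j then 1 else 0) :
    ¬ ∃ g : V16 ≃ₗ[ℂ] V16, ∀ x y, B' x y = B16 (g x) (g y) := by
  rintro ⟨g, hg⟩
  set f := g.symm.toLinearMap ∘ₗ LinearMap.inl ℂ _ _
  obtain ⟨T, hT, hfT⟩ := b.exists_countable_support_range Finsupp.basisSingleOne f
  obtain ⟨i, hi⟩ := b.exists_notMem_of_countable aleph0_lt_rank_V16 hT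
  have hgi : (g (b i)).2 = 0 := LinearMap.ext fun u => by
    rw [← B16_apply_inl, ← g.apply_symm_apply (u, 0), ← hg,
      b.apply_eq_repr_of_orthonormal B' hB'ortho]
    exact hfT u i hi
  have hbi : f (g (b i)).1 = b i := by
    simp [f, ← hgi]
  have := hfT (g (b i)).1 i hi
  rw [hbi, b.repr_self, Finsupp.single_eq_same] at this
  exact one_ne_zero this

/-- the form `B16` on `V = U ⊕ U*` (U countable-dimensional, both summands
isotropic, the form restricting to the canonical pairing) is not equivalent to any
symmetric bilinear form `B'` on `V` admitting an orthonormal basis: no linear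
automorphism `g` of `V` satisfies `B' x y = B16 (g x) (g y)` for all `x, y`. -/
theorem stmt_16 (ι : Type*) [DecidableEq ι] (b : Module.Basis ι ℂ V16)
    (B' : V16 →ₗ[ℂ] V16 →ₗ[ℂ] ℂ)
    (hB'symm : ∀ x y, B' x y = B' y x)
    (hB'ortho : ∀ i j, B' (b i) (b j) = if i = j then 1 else 0) :
    ¬ ∃ g : V16 ≃ₗ[ℂ] V16, ∀ x y, B' x y = B16 (g x) (g y) :=
  stmt_16_general ι b B' hB'ortho
end

section
/- Let g = o(V) or sp(V) for V with a non-degenerate symmetric (resp. antisymmetric) form, and let L be a g^M-module (g^M the corresponding Mackey Lie algebra o^M(V) or sp^M(V)) such that the annihilator of every vector l ∈ L contains o^M(V_f^⊥) (resp. sp^M(V_f^⊥)) for some finite-dimensional non-degenerate subspace V_f ⊆ V. Then for every l ∈ L, g·l = g^M·l; i.e., the orbit of l under the finitary subalgebra equals its orbit under the full Mackey algebra. -/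
/-!
Given `X ∈ g^M` and the subspace `V_f` attached to `l`, let `π` be the `B`-orthogonal projection
onto `V_f`; it exists because `V_f` is finite-dimensional and non-degenerate, and it is
self-adjoint because the form is reflexive. Then `Y := X - (1 - π) X (1 - π) = π X + (1 - π) X π`
has finite rank and lies in `g^M`, since `(1 - π) X (1 - π)` does. As `X - Y` vanishes on `V_f`,
it annihilates `l`, so `X · l = Y · l ∈ g · l`.
-/

attribute [local instance 100] LieRing.ofAssociativeRing

/-- The Mackey Lie algebra `o^M(V)` (resp. `sp^M(V)`) of a bilinear form `B` on `V`:
all endomorphisms `X` with `B(Xv,w) + B(v,Xw) = 0`, a Lie subalgebra of `End(V)`. -/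
def oM (V : Type*) [AddCommGroup V] [Module ℂ V]
    (B : V →ₗ[ℂ] V →ₗ[ℂ] ℂ) : LieSubalgebra ℂ (Module.End ℂ V) where
  carrier := {X | ∀ v w : V, B (X v) w + B v (X w) = 0}
  add_mem' := by
    intro a b ha hb v w
    simp only [LinearMap.add_apply, map_add, LinearMap.add_apply]
    linear_combination ha v w + hb v w
  zero_mem' := by intro v w; simp
  smul_mem' := by
    intro c a ha v w
    simp only [LinearMap.smul_apply, map_smul, LinearMap.smul_apply, smul_eq_mul]
    linear_combination c * ha v w
  lie_mem' := by
    intro X Y hX hY v w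
    simp only [Ring.lie_def, LinearMap.sub_apply, Module.End.mul_apply, map_sub,
      LinearMap.sub_apply]
    linear_combination hX (Y v) w - hY v (X w) - hY (X v) w + hX v (Y w)

open Module

theorem LinearMap.isRefl_of_symm_or_antisymm {R M : Type*} [CommRing R] [AddCommGroup M]
    [Module R M] {B : M →ₗ[R] M →ₗ[R] R}
    (hB : (∀ v w, B v w = B w v) ∨ (∀ v w, B v w = -B w v)) : B.IsRefl := by
  intro v w hvw
  rcases hB with h | h <;> simp [h w v, hvw]

section Projection

variable {K V : Type*} [Field K] [AddCommGroup V] [Module K V] {B : LinearMap.BilinForm K V}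

theorem exists_projection_sub_mem_orthogonal (hB : B.IsRefl) (W : Submodule K V)
    [FiniteDimensional K W] (hW : ∀ v ∈ W, (∀ u ∈ W, B v u = 0) → v = 0) :
    ∃ π : End K V, (∀ v, π v ∈ W) ∧ ∀ v, v - π v ∈ B.orthogonal W := by
  let ψ : V →ₗ[K] Dual K W := B.flip.compl₂ W.subtype
  have hinj : Function.Injective (ψ.domRestrict W) := by
    rw [← LinearMap.ker_eq_bot, Submodule.eq_bot_iff]
    intro x hx
    refine Subtype.ext (hW x x.2 fun u hu ↦ hB _ _ ?_)
    simpa [ψ] using LinearMap.congr_fun hx ⟨u, hu⟩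
  let e := (ψ.domRestrict W).linearEquivOfInjective hinj Subspace.dual_finrank_eq.symm
  refine ⟨W.subtype ∘ₗ e.symm.toLinearMap ∘ₗ ψ, fun v ↦ (e.symm (ψ v)).2,
    fun v u hu ↦ ?_⟩
  have he : ψ (e.symm (ψ v)) = ψ v := e.apply_symm_apply (ψ v)
  rw [map_sub, sub_eq_zero]
  exact (LinearMap.congr_fun he ⟨u, hu⟩).symm

theorem exists_isAdjointPair_projection (hB : B.IsRefl) (W : Submodule K V)
    [FiniteDimensional K W] (hW : ∀ v ∈ W, (∀ u ∈ W, B v u = 0) → v = 0) :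
    ∃ π : End K V, (∀ v, π v ∈ W) ∧ (∀ v ∈ W, π v = v) ∧ B.IsAdjointPair B π π := by
  obtain ⟨π, hπW, hπ⟩ := exists_projection_sub_mem_orthogonal hB W hW
  have hortho : ∀ u ∈ W, ∀ v, B (v - π v) u = 0 := fun u hu v ↦ hB _ _ (hπ v u hu)
  refine ⟨π, hπW, fun v hv ↦ ?_, fun v w ↦ ?_⟩
  · have := hW _ (W.sub_mem hv (hπW v)) fun u hu ↦ hortho u hu v
    exact (sub_eq_zero.mp this).symm
  · have h := hortho (π w) (hπW w) v
    rw [map_sub, LinearMap.sub_apply, sub_eq_zero] at h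
    have h' := hπ w (π v) (hπW v)
    rw [map_sub, sub_eq_zero] at h'
    rw [h', h]

end Projection

theorem finiteDimensional_range_sub_mul_mul {K V : Type*} [Field K] [AddCommGroup V]
    [Module K V] {π : End K V} [FiniteDimensional K (LinearMap.range π)] (X : End K V) :
    FiniteDimensional K (LinearMap.range (X - (1 - π) * X * (1 - π))) := by
  have hX : X - (1 - π) * X * (1 - π) = π * X + ((1 - π) * X) * π := by noncomm_ring
  have hle : LinearMap.range (X - (1 - π) * X * (1 - π)) ≤
      LinearMap.range π ⊔ (LinearMap.range π).map ((1 - π) * X) := by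
    rw [hX]
    exact (LinearMap.range_add_le _ _).trans
      (sup_le_sup (LinearMap.range_comp_le_range X π) (LinearMap.range_comp π _).le)
  exact Submodule.finiteDimensional_of_le hle

section Mackey

variable {V : Type*} [AddCommGroup V] [Module ℂ V] {B : V →ₗ[ℂ] V →ₗ[ℂ] ℂ}

theorem mul_mul_mem_oM {P X : End ℂ V} (hP : B.IsAdjointPair B P P) (hX : X ∈ oM V B) :
    P * X * P ∈ oM V B := by
  intro v w
  simp only [Module.End.mul_apply]
  rw [hP, ← hP v]
  exact hX (P v) (P w)

theorem exists_finiteDimensional_range_mem_oM_eqOn (hB : B.IsRefl) (W : Submodule ℂ V)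
    [FiniteDimensional ℂ W] (hW : ∀ v ∈ W, (∀ u ∈ W, B v u = 0) → v = 0) {X : End ℂ V}
    (hX : X ∈ oM V B) :
    ∃ Y ∈ oM V B, FiniteDimensional ℂ (LinearMap.range Y) ∧ ∀ v ∈ W, Y v = X v := by
  obtain ⟨π, hπW, hπ, hπB⟩ := exists_isAdjointPair_projection hB W hW
  have : FiniteDimensional ℂ (LinearMap.range π) :=
    Submodule.finiteDimensional_of_le (S₂ := W) (by rintro _ ⟨v, rfl⟩; exact hπW v)
  have hcompl : B.IsAdjointPair B ⇑(1 - π) ⇑(1 - π) := LinearMap.isAdjointPair_one.sub hπB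
  refine ⟨_, sub_mem hX (mul_mul_mem_oM hcompl hX), finiteDimensional_range_sub_mul_mul X,
    fun v hv ↦ ?_⟩
  simp [hπ v hv]

end Mackey

theorem stmt_19_general (V : Type*) [AddCommGroup V] [Module ℂ V]
    (B : V →ₗ[ℂ] V →ₗ[ℂ] ℂ)
    (hform : (∀ v w, B v w = B w v) ∨ (∀ v w, B v w = - B w v))
    (L : Type*) [AddCommGroup L] [Module ℂ L]
    [LieRingModule (oM V B) L] [LieModule ℂ (oM V B) L]
    (hla : ∀ l : L, ∃ Vf : Submodule ℂ V, FiniteDimensional ℂ Vf ∧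
      (∀ v ∈ Vf, (∀ u ∈ Vf, B v u = 0) → v = 0) ∧
      ∀ X : oM V B, (∀ v ∈ Vf, (X : Module.End ℂ V) v = 0) → ⁅X, l⁆ = 0) :
    ∀ l : L,
      {z : L | ∃ Y : oM V B,
          FiniteDimensional ℂ (LinearMap.range (Y : Module.End ℂ V)) ∧ z = ⁅Y, l⁆}
        = {z : L | ∃ X : oM V B, z = ⁅X, l⁆} := by
  intro l
  ext z
  refine ⟨fun ⟨Y, _, hz⟩ ↦ ⟨Y, hz⟩, ?_⟩
  rintro ⟨X, rfl⟩
  obtain ⟨W, hWfin, hW, hann⟩ := hla l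
  obtain ⟨Y, hY, hYfin, hYX⟩ :=
    exists_finiteDimensional_range_mem_oM_eqOn (LinearMap.isRefl_of_symm_or_antisymm hform) W hW X.2
  refine ⟨⟨Y, hY⟩, hYfin, ?_⟩
  have hXY : ⁅X - ⟨Y, hY⟩, l⁆ = 0 := hann _ fun v hv ↦ sub_eq_zero.mpr (hYX v hv).symm
  rwa [sub_lie, sub_eq_zero] at hXY

/-- let `g^M = o^M(V)` (resp. `sp^M(V)`) for a non-degenerate symmetric
(resp. antisymmetric) form `B`, and let `g ⊆ g^M` be the finitary subalgebra
`o(V) = Λ²V` (resp. `sp(V) = S²V`) of finite-rank elements of `g^M`.  If `L` is a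
`g^M`-module such that the annihilator of every `l ∈ L` contains `o^M(V_f^⊥)` (the
elements of `g^M` vanishing on `V_f`) for some finite-dimensional non-degenerate
`V_f ⊆ V`, then `g·l = g^M·l` for every `l ∈ L`. -/
theorem stmt_19 (V : Type*) [AddCommGroup V] [Module ℂ V]
    (B : V →ₗ[ℂ] V →ₗ[ℂ] ℂ)
    (hform : (∀ v w, B v w = B w v) ∨ (∀ v w, B v w = - B w v))
    (hnd : ∀ v : V, (∀ w : V, B v w = 0) → v = 0)
    (L : Type*) [AddCommGroup L] [Module ℂ L]
    [LieRingModule (oM V B) L] [LieModule ℂ (oM V B) L]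
    (hla : ∀ l : L, ∃ Vf : Submodule ℂ V, FiniteDimensional ℂ Vf ∧
      (∀ v ∈ Vf, (∀ u ∈ Vf, B v u = 0) → v = 0) ∧
      ∀ X : oM V B, (∀ v ∈ Vf, (X : Module.End ℂ V) v = 0) → ⁅X, l⁆ = 0) :
    ∀ l : L,
      {z : L | ∃ Y : oM V B,
          FiniteDimensional ℂ (LinearMap.range (Y : Module.End ℂ V)) ∧ z = ⁅Y, l⁆}
        = {z : L | ∃ X : oM V B, z = ⁅X, l⁆} :=
  stmt_19_general V B hform L hla
end
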